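/- For every real b with −1 ≤ b ≤ 0, the integral over [0, 2π] of the function φ ↦ max(cos φ + b, 0)/2 equals √(1 − b²) + b·arccos(−b). -/
import Mathlib


open Real

/-- For `-1 ≤ b ≤ 0`, the integral over `[0, 2π]` of `φ ↦ max (cos φ + b) 0 / 2`
equals `√(1 - b²) + b · arccos (-b)`. -/
theorem integral_max_cos_add_bias (b : ℝ) (hb₁ : -1 ≤ b) (hb₂ : b ≤ 0) :
    ∫ φ in (0:ℝ)..(2 * π), max (Real.cos φ + b) 0 / 2
      = Real.sqrt (1 - b ^ 2) + b * Real.arccos (-b) := by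
  set a := Real.arccos (-b) with ha
  have hcos : Real.cos a = -b := Real.cos_arccos (by linarith) (by linarith)
  have hsin : Real.sin a = Real.sqrt (1 - b ^ 2) := by
    rw [ha, Real.sin_arccos]; ring_nf
  have ha0 : 0 ≤ a := Real.arccos_nonneg _
  have haπ : a ≤ π := Real.arccos_le_pi _
  have hπ : 0 < π := Real.pi_pos
  have h1 : a ≤ 2*π - a := by linarith
  have h2 : 2*π - a ≤ 2*π := by linarith
  have hcont : Continuous fun φ : ℝ => max (Real.cos φ + b) 0 / 2 :=
    ((Real.continuous_cos.add continuous_const).max continuous_const).div_const 2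
  have key : ∀ u v : ℝ, (∫ x in u..v, (Real.cos x + b)/2)
      = (Real.sin v - Real.sin u + (v-u)*b)/2 := by
    intro u v
    rw [intervalIntegral.integral_div,
      intervalIntegral.integral_add (Real.continuous_cos.intervalIntegrable u v)
        (intervalIntegrable_const),
      integral_cos, intervalIntegral.integral_const, smul_eq_mul]
  have hc2π : ∀ x : ℝ, Real.cos x = Real.cos (2*π - x) := by
    intro x
    rw [Real.cos_sub, Real.cos_two_pi, Real.sin_two_pi]; ring
  rw [← intervalIntegral.integral_add_adjacent_intervals
        (hcont.intervalIntegrable 0 a) (hcont.intervalIntegrable a (2*π)),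
      ← intervalIntegral.integral_add_adjacent_intervals
        (hcont.intervalIntegrable a (2*π - a)) (hcont.intervalIntegrable (2*π - a) (2*π))]
  have e1 : (∫ x in (0:ℝ)..a, max (Real.cos x + b) 0 / 2)
      = ∫ x in (0:ℝ)..a, (Real.cos x + b)/2 := by
    apply intervalIntegral.integral_congr
    intro x hx
    rw [Set.uIcc_of_le ha0] at hx
    have hle : Real.cos a ≤ Real.cos x :=
      Real.cos_le_cos_of_nonneg_of_le_pi hx.1 haπ hx.2
    simp only [max_eq_left (by linarith : (0:ℝ) ≤ Real.cos x + b)]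
  have e2 : (∫ x in a..(2*π - a), max (Real.cos x + b) 0 / 2) = 0 := by
    have h0 : (∫ x in a..(2*π - a), max (Real.cos x + b) 0 / 2)
        = ∫ _x in a..(2*π - a), (0:ℝ) := by
      apply intervalIntegral.integral_congr
      intro x hx
      rw [Set.uIcc_of_le h1] at hx
      have hle : Real.cos x ≤ Real.cos a := by
        rcases le_or_gt x π with h | h
        · exact Real.cos_le_cos_of_nonneg_of_le_pi ha0 h hx.1
        · rw [hc2π x]
          exact Real.cos_le_cos_of_nonneg_of_le_pi ha0 (by linarith) (by linarith [hx.2])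
      simp only [max_eq_right (by linarith : Real.cos x + b ≤ 0), zero_div]
    rw [h0]; simp
  have e3 : (∫ x in (2*π - a)..(2*π), max (Real.cos x + b) 0 / 2)
      = ∫ x in (2*π - a)..(2*π), (Real.cos x + b)/2 := by
    apply intervalIntegral.integral_congr
    intro x hx
    rw [Set.uIcc_of_le h2] at hx
    have hle : Real.cos a ≤ Real.cos x := by
      rw [hc2π x]
      exact Real.cos_le_cos_of_nonneg_of_le_pi (by linarith [hx.2]) haπ (by linarith [hx.1])
    simp only [max_eq_left (by linarith : (0:ℝ) ≤ Real.cos x + b)]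
  rw [e1, e2, e3, key, key]
  have hs : Real.sin (2*π - a) = -Real.sin a := by
    rw [Real.sin_sub, Real.sin_two_pi, Real.cos_two_pi]; ring
  rw [hs, Real.sin_two_pi, Real.sin_zero, ← hsin]
  ring
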